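/- Let $S(\lambda; X, Y, T)$ be smooth and suppose it satisfies the system $\partial_Y S = V\, e^{-\partial_T S}$ and $\partial_X S = e^{\partial_T S} + U$, where $U, V$ are smooth functions of $(X,Y,T)$ only, and where $e^{\pm \partial_T S}$ are treated as linearly independent functions of $\lambda$. Then the compatibility condition $\partial_X \partial_Y S = \partial_Y \partial_X S$ is equivalent to the system $\partial_X V - V\, \partial_T U = 0$ and $\partial_Y U + \partial_T V = 0$. -/

import Mathlib

/-- Partial derivatives of a function of (X,Y,T). -/
noncomputable def pX (f : ℝ → ℝ → ℝ → ℝ) : ℝ → ℝ → ℝ → ℝ :=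
  fun x y t => deriv (fun s => f s y t) x
noncomputable def pY (f : ℝ → ℝ → ℝ → ℝ) : ℝ → ℝ → ℝ → ℝ :=
  fun x y t => deriv (fun s => f x s t) y
noncomputable def pT (f : ℝ → ℝ → ℝ → ℝ) : ℝ → ℝ → ℝ → ℝ :=
  fun x y t => deriv (fun s => f x y s) t

/-- Partial derivatives of S(λ; X,Y,T) in the time slots. -/
noncomputable def sX (S : ℝ → ℝ → ℝ → ℝ → ℝ) : ℝ → ℝ → ℝ → ℝ → ℝ :=
  fun lam x y t => deriv (fun s => S lam s y t) x
noncomputable def sY (S : ℝ → ℝ → ℝ → ℝ → ℝ) : ℝ → ℝ → ℝ → ℝ → ℝ :=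
  fun lam x y t => deriv (fun s => S lam x s t) y
noncomputable def sT (S : ℝ → ℝ → ℝ → ℝ → ℝ) : ℝ → ℝ → ℝ → ℝ → ℝ :=
  fun lam x y t => deriv (fun s => S lam x y s) t

def Smooth3 (f : ℝ → ℝ → ℝ → ℝ) : Prop :=
  ContDiff ℝ (⊤ : ℕ∞) (fun v : ℝ × ℝ × ℝ => f v.1 v.2.1 v.2.2)

def Smooth4 (S : ℝ → ℝ → ℝ → ℝ → ℝ) : Prop :=
  ContDiff ℝ (⊤ : ℕ∞) (fun v : ℝ × ℝ × ℝ × ℝ => S v.1 v.2.1 v.2.2.1 v.2.2.2)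

section helpers

variable {E : Type*} [NormedAddCommGroup E] [NormedSpace ℝ E]

lemma my_fderiv_apply_const {F : E → ℝ} (hF : ContDiff ℝ (⊤ : ℕ∞) F) (p v w : E) :
    fderiv ℝ (fun q => fderiv ℝ F q w) p v = fderiv ℝ (fderiv ℝ F) p v w := by
  have hc : DifferentiableAt ℝ (fderiv ℝ F) p :=
    ((hF.fderiv_right (WithTop.coe_le_coe.mpr (le_top : ((1 + 1 : ℕ) : ℕ∞) ≤ ⊤))).differentiable one_ne_zero) p
  rw [fderiv_clm_apply hc (differentiableAt_const w)]
  simp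

lemma my_clairaut {F : E → ℝ} (hF : ContDiff ℝ (⊤ : ℕ∞) F) (p v w : E) :
    fderiv ℝ (fun q => fderiv ℝ F q w) p v = fderiv ℝ (fun q => fderiv ℝ F q v) p w := by
  rw [my_fderiv_apply_const hF, my_fderiv_apply_const hF]
  exact hF.contDiffAt.isSymmSndFDerivAt (by rw [minSmoothness_of_isRCLikeNormedField]; exact WithTop.coe_le_coe.mpr (le_top : (2 : ℕ∞) ≤ ⊤)) v w

lemma my_slice {G : E → ℝ} (hG : Differentiable ℝ G)
    {c : ℝ → E} {v : E} {s : ℝ} (hc : HasDerivAt c v s) :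
    HasDerivAt (fun u => G (c u)) (fderiv ℝ G (c s) v) s :=
  (hG (c s)).hasFDerivAt.comp_hasDerivAt s hc

end helpers

/-- compatibility of the system (6.5)–(6.6), ∂_Y S = V e^{−S_T},
∂_X S = e^{S_T} + U, is equivalent to the d2DTL system (6.9), assuming the functions
e^{±S_T} and 1 are linearly independent as functions of λ. -/
theorem d2DTL_compatibility (S : ℝ → ℝ → ℝ → ℝ → ℝ) (U V : ℝ → ℝ → ℝ → ℝ)
    (hS : Smooth4 S) (hU : Smooth3 U) (hV : Smooth3 V)
    (heqY : ∀ lam x y t, sY S lam x y t = V x y t * Real.exp (-(sT S lam x y t)))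
    (heqX : ∀ lam x y t, sX S lam x y t = Real.exp (sT S lam x y t) + U x y t)
    (hind : ∀ x y t (a b c : ℝ),
      (∀ lam, a * Real.exp (sT S lam x y t) + b * Real.exp (-(sT S lam x y t)) + c = 0) →
      a = 0 ∧ b = 0 ∧ c = 0) :
    ∀ x y t, pX V x y t - V x y t * pT U x y t = 0 ∧ pY U x y t + pT V x y t = 0 := by
  intro x y t
  set F : ℝ × ℝ × ℝ × ℝ → ℝ := fun v => S v.1 v.2.1 v.2.2.1 v.2.2.2 with hFdef
  have hF : ContDiff ℝ (⊤ : ℕ∞) F := hS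
  have hFd : Differentiable ℝ F := hF.differentiable (by simp)
  have hDd : ∀ w : ℝ × ℝ × ℝ × ℝ, Differentiable ℝ (fun p => fderiv ℝ F p w) :=
    fun w => ((hF.fderiv_right (WithTop.coe_le_coe.mpr (le_top : ((1 + 1 : ℕ) : ℕ∞) ≤ ⊤))).clm_apply contDiff_const).differentiable one_ne_zero
  have hUd : Differentiable ℝ (fun v : ℝ × ℝ × ℝ => U v.1 v.2.1 v.2.2) :=
    hU.differentiable (by simp)
  have hVd : Differentiable ℝ (fun v : ℝ × ℝ × ℝ => V v.1 v.2.1 v.2.2) :=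
    hV.differentiable (by simp)
  -- curves
  have hcX : ∀ lam : ℝ, HasDerivAt (fun u => ((lam, u, y, t) : ℝ × ℝ × ℝ × ℝ))
      ((0, 1, 0, 0) : ℝ × ℝ × ℝ × ℝ) x := fun lam =>
    (hasDerivAt_const x lam).prodMk ((hasDerivAt_id x).prodMk
      ((hasDerivAt_const x y).prodMk (hasDerivAt_const x t)))
  have hcY : ∀ lam : ℝ, HasDerivAt (fun u => ((lam, x, u, t) : ℝ × ℝ × ℝ × ℝ))
      ((0, 0, 1, 0) : ℝ × ℝ × ℝ × ℝ) y := fun lam =>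
    (hasDerivAt_const y lam).prodMk ((hasDerivAt_const y x).prodMk
      ((hasDerivAt_id y).prodMk (hasDerivAt_const y t)))
  have hcT : ∀ (lam a b : ℝ) (s : ℝ), HasDerivAt (fun u => ((lam, a, b, u) : ℝ × ℝ × ℝ × ℝ))
      ((0, 0, 0, 1) : ℝ × ℝ × ℝ × ℝ) s := fun lam a b s =>
    (hasDerivAt_const s lam).prodMk ((hasDerivAt_const s a).prodMk
      ((hasDerivAt_const s b).prodMk (hasDerivAt_id s)))
  -- partial derivatives of S as directional fderivs
  have hsT : ∀ lam a b c : ℝ, sT S lam a b c = fderiv ℝ F (lam, a, b, c) (0, 0, 0, 1) := by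
    intro lam a b c
    exact (my_slice hFd (hcT lam a b c)).deriv
  have hsX : ∀ lam : ℝ, sX S lam x y t = fderiv ℝ F (lam, x, y, t) (0, 1, 0, 0) := by
    intro lam
    exact (my_slice hFd (hcX lam)).deriv
  have hsY : ∀ lam : ℝ, sY S lam x y t = fderiv ℝ F (lam, x, y, t) (0, 0, 1, 0) := by
    intro lam
    exact (my_slice hFd (hcY lam)).deriv
  -- the equations, valid everywhere, in fderiv form
  have heqY' : ∀ (lam a b c : ℝ), fderiv ℝ F (lam, a, b, c) (0, 0, 1, 0) =
      V a b c * Real.exp (-(fderiv ℝ F (lam, a, b, c) (0, 0, 0, 1))) := by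
    intro lam a b c
    have h1 : sY S lam a b c = fderiv ℝ F (lam, a, b, c) (0, 0, 1, 0) := by
      have hc : HasDerivAt (fun u => ((lam, a, u, c) : ℝ × ℝ × ℝ × ℝ))
          ((0, 0, 1, 0) : ℝ × ℝ × ℝ × ℝ) b :=
        (hasDerivAt_const b lam).prodMk ((hasDerivAt_const b a).prodMk
          ((hasDerivAt_id b).prodMk (hasDerivAt_const b c)))
      exact (my_slice hFd hc).deriv
    rw [← h1, ← hsT lam a b c]; exact heqY lam a b c
  have heqX' : ∀ (lam a b c : ℝ), fderiv ℝ F (lam, a, b, c) (0, 1, 0, 0) =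
      Real.exp (fderiv ℝ F (lam, a, b, c) (0, 0, 0, 1)) + U a b c := by
    intro lam a b c
    have h1 : sX S lam a b c = fderiv ℝ F (lam, a, b, c) (0, 1, 0, 0) := by
      have hc : HasDerivAt (fun u => ((lam, u, b, c) : ℝ × ℝ × ℝ × ℝ))
          ((0, 1, 0, 0) : ℝ × ℝ × ℝ × ℝ) a :=
        (hasDerivAt_const a lam).prodMk ((hasDerivAt_id a).prodMk
          ((hasDerivAt_const a b).prodMk (hasDerivAt_const a c)))
      exact (my_slice hFd hc).deriv
    rw [← h1, ← hsT lam a b c]; exact heqX lam a b c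
  -- derivatives of U and V slices
  have hVX : HasDerivAt (fun s => V s y t) (pX V x y t) x := by
    have hc : HasDerivAt (fun u => ((u, y, t) : ℝ × ℝ × ℝ)) ((1, 0, 0) : ℝ × ℝ × ℝ) x :=
      (hasDerivAt_id x).prodMk ((hasDerivAt_const x y).prodMk (hasDerivAt_const x t))
    have h := (my_slice hVd hc).differentiableAt
    simpa only [pX] using h.hasDerivAt
  have hUY : HasDerivAt (fun s => U x s t) (pY U x y t) y := by
    have hc : HasDerivAt (fun u => ((x, u, t) : ℝ × ℝ × ℝ)) ((0, 1, 0) : ℝ × ℝ × ℝ) y :=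
      (hasDerivAt_const y x).prodMk ((hasDerivAt_id y).prodMk (hasDerivAt_const y t))
    have h := (my_slice hUd hc).differentiableAt
    simpa only [pY] using h.hasDerivAt
  have hUT : HasDerivAt (fun s => U x y s) (pT U x y t) t := by
    have hc : HasDerivAt (fun u => ((x, y, u) : ℝ × ℝ × ℝ)) ((0, 0, 1) : ℝ × ℝ × ℝ) t :=
      (hasDerivAt_const t x).prodMk ((hasDerivAt_const t y).prodMk (hasDerivAt_id t))
    have h := (my_slice hUd hc).differentiableAt
    simpa only [pT] using h.hasDerivAt
  have hVT : HasDerivAt (fun s => V x y s) (pT V x y t) t := by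
    have hc : HasDerivAt (fun u => ((x, y, u) : ℝ × ℝ × ℝ)) ((0, 0, 1) : ℝ × ℝ × ℝ) t :=
      (hasDerivAt_const t x).prodMk ((hasDerivAt_const t y).prodMk (hasDerivAt_id t))
    have h := (my_slice hVd hc).differentiableAt
    simpa only [pT] using h.hasDerivAt
  -- the master identity, for every lam
  have key : ∀ lam, (0 : ℝ) * Real.exp (sT S lam x y t) +
      (pX V x y t - V x y t * pT U x y t) * Real.exp (-(sT S lam x y t)) +
      (-(pY U x y t + pT V x y t)) = 0 := by
    intro lam
    have hp : ((fun u => ((lam, u, y, t) : ℝ × ℝ × ℝ × ℝ)) x) = (lam, x, y, t) := rfl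
    -- second derivatives
    -- (1) ∂_X of the Y-equation
    have gYX : HasDerivAt (fun s => fderiv ℝ F (lam, s, y, t) (0, 0, 1, 0))
        (fderiv ℝ (fun q => fderiv ℝ F q (0, 0, 1, 0)) (lam, x, y, t) (0, 1, 0, 0)) x :=
      my_slice (hDd _) (hcX lam)
    have gTX : HasDerivAt (fun s => fderiv ℝ F (lam, s, y, t) (0, 0, 0, 1))
        (fderiv ℝ (fun q => fderiv ℝ F q (0, 0, 0, 1)) (lam, x, y, t) (0, 1, 0, 0)) x :=
      my_slice (hDd _) (hcX lam)
    have funY : (fun s => fderiv ℝ F (lam, s, y, t) (0, 0, 1, 0)) =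
        fun s => V s y t * Real.exp (-(fderiv ℝ F (lam, s, y, t) (0, 0, 0, 1))) := by
      funext s; exact heqY' lam s y t
    have rhs1 := hVX.mul (gTX.neg.exp)
    rw [funY] at gYX
    have eq1 := gYX.unique rhs1
    -- (2) ∂_Y of the X-equation
    have gXY : HasDerivAt (fun s => fderiv ℝ F (lam, x, s, t) (0, 1, 0, 0))
        (fderiv ℝ (fun q => fderiv ℝ F q (0, 1, 0, 0)) (lam, x, y, t) (0, 0, 1, 0)) y :=
      my_slice (hDd _) (hcY lam)
    have gTY : HasDerivAt (fun s => fderiv ℝ F (lam, x, s, t) (0, 0, 0, 1))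
        (fderiv ℝ (fun q => fderiv ℝ F q (0, 0, 0, 1)) (lam, x, y, t) (0, 0, 1, 0)) y :=
      my_slice (hDd _) (hcY lam)
    have funX2 : (fun s => fderiv ℝ F (lam, x, s, t) (0, 1, 0, 0)) =
        fun s => Real.exp (fderiv ℝ F (lam, x, s, t) (0, 0, 0, 1)) + U x s t := by
      funext s; exact heqX' lam x s t
    have rhs2 := (gTY.exp).add hUY
    rw [funX2] at gXY
    have eq2 := gXY.unique rhs2
    -- (3) ∂_T of the X-equation
    have gXT : HasDerivAt (fun s => fderiv ℝ F (lam, x, y, s) (0, 1, 0, 0))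
        (fderiv ℝ (fun q => fderiv ℝ F q (0, 1, 0, 0)) (lam, x, y, t) (0, 0, 0, 1)) t :=
      my_slice (hDd _) (hcT lam x y t)
    have gTT : HasDerivAt (fun s => fderiv ℝ F (lam, x, y, s) (0, 0, 0, 1))
        (fderiv ℝ (fun q => fderiv ℝ F q (0, 0, 0, 1)) (lam, x, y, t) (0, 0, 0, 1)) t :=
      my_slice (hDd _) (hcT lam x y t)
    have funX3 : (fun s => fderiv ℝ F (lam, x, y, s) (0, 1, 0, 0)) =
        fun s => Real.exp (fderiv ℝ F (lam, x, y, s) (0, 0, 0, 1)) + U x y s := by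
      funext s; exact heqX' lam x y s
    have rhs3 := (gTT.exp).add hUT
    rw [funX3] at gXT
    have eq3 := gXT.unique rhs3
    -- (4) ∂_T of the Y-equation
    have gYT : HasDerivAt (fun s => fderiv ℝ F (lam, x, y, s) (0, 0, 1, 0))
        (fderiv ℝ (fun q => fderiv ℝ F q (0, 0, 1, 0)) (lam, x, y, t) (0, 0, 0, 1)) t :=
      my_slice (hDd _) (hcT lam x y t)
    have funY4 : (fun s => fderiv ℝ F (lam, x, y, s) (0, 0, 1, 0)) =
        fun s => V x y s * Real.exp (-(fderiv ℝ F (lam, x, y, s) (0, 0, 0, 1))) := by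
      funext s; exact heqY' lam x y s
    have rhs4 := hVT.mul (gTT.neg.exp)
    rw [funY4] at gYT
    have eq4 := gYT.unique rhs4
    -- Clairaut
    have c1 := my_clairaut hF (lam, x, y, t)
      ((0, 1, 0, 0) : ℝ × ℝ × ℝ × ℝ) ((0, 0, 1, 0) : ℝ × ℝ × ℝ × ℝ)
    have c2 := my_clairaut hF (lam, x, y, t)
      ((0, 1, 0, 0) : ℝ × ℝ × ℝ × ℝ) ((0, 0, 0, 1) : ℝ × ℝ × ℝ × ℝ)
    have c3 := my_clairaut hF (lam, x, y, t)
      ((0, 0, 1, 0) : ℝ × ℝ × ℝ × ℝ) ((0, 0, 0, 1) : ℝ × ℝ × ℝ × ℝ)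
    -- assemble
    rw [hsT lam x y t]
    set Ev : ℝ := fderiv ℝ F (lam, x, y, t) (0, 0, 0, 1) with hEv
    set A : ℝ := fderiv ℝ (fun q => fderiv ℝ F q ((0,0,0,1) : ℝ × ℝ × ℝ × ℝ))
      (lam, x, y, t) (0, 0, 0, 1) with hA
    have hB : Real.exp Ev ≠ 0 := Real.exp_ne_zero Ev
    rw [c1, eq2, c3, eq4] at eq1
    rw [c2, eq3] at eq1
    simp only [Pi.neg_apply] at eq1
    rw [Real.exp_neg] at eq1 ⊢
    field_simp at eq1 ⊢
    nlinarith [eq1, Real.exp_pos Ev]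
  obtain ⟨_, hb, hc⟩ := hind x y t 0 _ _ key
  exact ⟨hb, by linarith⟩
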